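/- Let G be a finite group with normal subgroups G₁,…,Gₙ such that [Gᵢ,Gⱼ] = 1 for i ≠ j and G = G₁⋯Gₙ. If for each i a pronormal subgroup Hᵢ of Gᵢ is chosen and H = ⟨H₁,…,Hₙ⟩, then H is pronormal in G. -/

import Mathlib

/-!
Since the factors other than `Gᵢ` centralize it, every `g` is `c * gᵢ` with `c ∈ C_G(Gᵢ)`
and `gᵢ ∈ Gᵢ`, so `Hᵢ^g = Hᵢ^{gᵢ}`. Pronormality of `Hᵢ` in `Gᵢ` gives `xᵢ ∈ ⟨Hᵢ, Hᵢ^{gᵢ}⟩`,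
a subgroup of `⟨H, H^g⟩`, with `Hᵢ^{xᵢ} = Hᵢ^g`. The `xᵢ` commute, and their product `x` acts
on `Hᵢ` as `xᵢ` does, so `H^x = ⨆ Hᵢ^{xᵢ} = ⨆ Hᵢ^g = H^g`.
-/

open Pointwise

/-- `conjSub H g` is the conjugate subgroup `H^g = g⁻¹Hg`. -/
def conjSub {G : Type*} [Group G] (H : Subgroup G) (g : G) : Subgroup G :=
  MulAut.conj g⁻¹ • H

/-- `H` is pronormal: for every `g`, `H` and `H^g` are conjugate in `⟨H, H^g⟩`. -/
def IsPronormal {G : Type*} [Group G] (H : Subgroup G) : Prop :=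
  ∀ g : G, ∃ x ∈ H ⊔ conjSub H g, conjSub H x = conjSub H g

namespace Subgroup

variable {G : Type*} [Group G]

theorem le_normalizer_centralizer (K : Subgroup G) : K ≤ normalizer (centralizer (K : Set G)) :=
  le_normalizer.trans (le_normalizer_of_normal_subgroupOf (centralizer_le_normalizer _))

theorem exists_mem_centralizer_mul_eq {ι : Type*} {Gs : ι → Subgroup G}
    (hcent : ∀ i j, i ≠ j → Gs j ≤ centralizer (Gs i : Set G)) (hgen : ⨆ i, Gs i = ⊤)
    (i : ι) (g : G) : ∃ c ∈ centralizer (Gs i : Set G), ∃ y ∈ Gs i, c * y = g := by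
  have hg : g ∈ centralizer (Gs i : Set G) ⊔ Gs i := by
    have : ⨆ j, Gs j ≤ centralizer (Gs i : Set G) ⊔ Gs i := iSup_le fun j => by
      by_cases hij : i = j
      · exact hij ▸ le_sup_right
      · exact (hcent i j hij).trans le_sup_left
    exact this (hgen ▸ mem_top g)
  rwa [← SetLike.mem_coe,
    coe_mul_of_right_le_normalizer_left _ _ (le_normalizer_centralizer _)] at hg

theorem exists_noncommProd_eq_mul {ι : Type*} [Fintype ι] [DecidableEq ι] {Gs : ι → Subgroup G}
    (hcent : ∀ i j, i ≠ j → Gs j ≤ centralizer (Gs i : Set G)) {x : ι → G}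
    (hx : ∀ i, x i ∈ Gs i) (comm) (i : ι) :
    ∃ c ∈ centralizer (Gs i : Set G), Finset.univ.noncommProd x comm = c * x i :=
  ⟨_, noncommProd_mem _ _ fun j hj => hcent i j (Finset.ne_of_mem_erase hj).symm (hx j),
    (Finset.noncommProd_erase_mul _ (Finset.mem_univ i) x comm).symm⟩

end Subgroup

section conjSub

variable {G : Type*} [Group G]

open Subgroup

theorem mem_conjSub {A : Subgroup G} {g x : G} :
    x ∈ conjSub A g ↔ ∃ a ∈ A, g⁻¹ * a * g = x := by
  simp [conjSub, mem_smul_pointwise_iff_exists, MulAut.smul_def, mul_assoc]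

theorem conjSub_mul (A : Subgroup G) (g k : G) :
    conjSub A (g * k) = conjSub (conjSub A g) k := by
  simp only [conjSub, mul_inv_rev, map_mul, mul_smul]

theorem conjSub_eq_self_of_mem_centralizer {A : Subgroup G} {c : G}
    (hc : c ∈ centralizer (A : Set G)) : conjSub A c = A := by
  ext x
  rw [mem_conjSub]
  constructor
  · rintro ⟨a, ha, rfl⟩
    rwa [mul_assoc, mem_centralizer_iff.mp hc a ha, inv_mul_cancel_left]
  · intro hx
    exact ⟨x, hx, by rw [mul_assoc, mem_centralizer_iff.mp hc x hx, inv_mul_cancel_left]⟩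

theorem conjSub_mul_of_mem_centralizer {A : Subgroup G} {c : G}
    (hc : c ∈ centralizer (A : Set G)) (g : G) : conjSub A (c * g) = conjSub A g := by
  rw [conjSub_mul, conjSub_eq_self_of_mem_centralizer hc]

theorem conjSub_iSup {ι : Sort*} (A : ι → Subgroup G) (g : G) :
    conjSub (⨆ i, A i) g = ⨆ i, conjSub (A i) g :=
  map_iSup _ _

theorem map_conjSub {G' : Type*} [Group G'] (φ : G →* G') (A : Subgroup G) (g : G) :
    (conjSub A g).map φ = conjSub (A.map φ) (φ g) := by
  ext y
  simp only [mem_map, mem_conjSub]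
  constructor
  · rintro ⟨x, ⟨a, ha, rfl⟩, rfl⟩
    exact ⟨φ a, ⟨a, ha, rfl⟩, by simp⟩
  · rintro ⟨b, ⟨a, ha, rfl⟩, rfl⟩
    exact ⟨g⁻¹ * a * g, ⟨a, ha, rfl⟩, by simp⟩

theorem IsPronormal.exists_conjSub_eq_of_subgroupOf {A K : Subgroup G} (hAK : A ≤ K)
    (hA : IsPronormal (A.subgroupOf K)) {g : G} (hg : g ∈ K) :
    ∃ x ∈ K, x ∈ A ⊔ conjSub A g ∧ conjSub A x = conjSub A g := by
  obtain ⟨x, hx_mem, hx_conj⟩ := hA ⟨g, hg⟩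
  have hA_map : (A.subgroupOf K).map K.subtype = A := by
    rw [subgroupOf_map_subtype, inf_eq_left.mpr hAK]
  have hmap (k : K) : (conjSub (A.subgroupOf K) k).map K.subtype = conjSub A k := by
    rw [map_conjSub, hA_map]
    rfl
  refine ⟨x, x.2, ?_, ?_⟩
  · have := mem_map_of_mem K.subtype hx_mem
    rwa [Subgroup.map_sup, hA_map, hmap] at this
  · simpa only [hmap] using congrArg (map K.subtype) hx_conj

end conjSub

theorem stmt_3_general {G : Type*} [Group G] (n : ℕ)
    (Gs : Fin n → Subgroup G)
    (hcomm : ∀ i j, i ≠ j → ⁅Gs i, Gs j⁆ = ⊥)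
    (hgen : (⨆ i, Gs i) = ⊤)
    (Hs : Fin n → Subgroup G) (hle : ∀ i, Hs i ≤ Gs i)
    (hprn : ∀ i, IsPronormal ((Hs i).subgroupOf (Gs i))) :
    IsPronormal (⨆ i, Hs i) := by
  intro g
  have hcent : ∀ i j, i ≠ j → Gs j ≤ Subgroup.centralizer (Gs i : Set G) := fun i j hij =>
    Subgroup.commutator_eq_bot_iff_le_centralizer.mp
      ((Subgroup.commutator_comm _ _).trans (hcomm i j hij))
  have hHs_cent (i) : Subgroup.centralizer (Gs i : Set G) ≤ Subgroup.centralizer (Hs i : Set G) :=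
    Subgroup.centralizer_le (hle i)
  have hy (i) : ∃ y ∈ Gs i, conjSub (Hs i) y = conjSub (Hs i) g := by
    obtain ⟨c, hc, y, hy, rfl⟩ := Subgroup.exists_mem_centralizer_mul_eq hcent hgen i g
    exact ⟨y, hy, (conjSub_mul_of_mem_centralizer (hHs_cent i hc) y).symm⟩
  choose y hyG hy using hy
  choose x hxG hx_mem hx_conj using
    fun i => (hprn i).exists_conjSub_eq_of_subgroupOf (hle i) (hyG i)
  have comm : (↑(Finset.univ : Finset (Fin n)) : Set (Fin n)).Pairwise
      fun i j => Commute (x i) (x j) := fun i _ j _ hij =>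
    Subgroup.mem_centralizer_iff.mp (hcent i j hij (hxG j)) (x i) (hxG i)
  refine ⟨Finset.univ.noncommProd x comm, Subgroup.noncommProd_mem _ _ fun i _ => ?_, ?_⟩
  · rw [conjSub_iSup]
    exact sup_le_sup (le_iSup Hs i) (le_iSup (fun i => conjSub (Hs i) g) i) (hy i ▸ hx_mem i)
  · rw [conjSub_iSup, conjSub_iSup]
    refine iSup_congr fun i => ?_
    obtain ⟨c, hc, hxc⟩ := Subgroup.exists_noncommProd_eq_mul hcent hxG comm i
    rw [hxc, conjSub_mul_of_mem_centralizer (hHs_cent i hc), hx_conj i, hy i]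

theorem stmt_3 {G : Type*} [Group G] [Finite G] (n : ℕ)
    (Gs : Fin n → Subgroup G) (hnorm : ∀ i, (Gs i).Normal)
    (hcomm : ∀ i j, i ≠ j → ⁅Gs i, Gs j⁆ = ⊥)
    (hgen : (⨆ i, Gs i) = ⊤)
    (Hs : Fin n → Subgroup G) (hle : ∀ i, Hs i ≤ Gs i)
    (hprn : ∀ i, IsPronormal ((Hs i).subgroupOf (Gs i))) :
    IsPronormal (⨆ i, Hs i) :=
  stmt_3_general n Gs hcomm hgen Hs hle hprn
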